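/- If β ∉ α^H, then |β^{H_α}| ≤ |β^H|, with equality if and only if every pair (γ,δ) with γ ∈ α^H and δ ∈ β^H is an arc of the orbital graph Γ(H,Ω,(α,β)). -/

import Mathlib

/-! `β^{H_α} ⊆ β^H`, and every arc `(γ, δ)` with `γ = g α` is the `g`-translate of the arc
`(α, g⁻¹ δ)`. So all pairs in `α^H × β^H` are arcs iff `β^{H_α} = β^H`, which for finite
sets with one inside the other is equality of cardinalities. -/

variable {Ω : Type*} [Fintype Ω] [DecidableEq Ω]

/-- The arc set of the orbital graph of `H` with base-pair `(α, β)`: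
`{(α^h, β^h) : h ∈ H}`. -/
def orbArcs (H : Subgroup (Equiv.Perm Ω)) (α β : Ω) : Set (Ω × Ω) :=
  {p | ∃ h ∈ H, h α = p.1 ∧ h β = p.2}

/-- The orbit of `α` under `H`. -/
def orb (H : Subgroup (Equiv.Perm Ω)) (α : Ω) : Set Ω :=
  {γ | ∃ h ∈ H, h α = γ}

/-- The orbit of `β` under the stabilizer `H_α`. -/
def stabOrb (H : Subgroup (Equiv.Perm Ω)) (α β : Ω) : Set Ω :=
  {γ | ∃ h ∈ H, h α = α ∧ h β = γ}

section OrbitalGraph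

variable {Ω : Type*} (H : Subgroup (Equiv.Perm Ω)) {α β : Ω}

theorem stabOrb_subset_orb : stabOrb H α β ⊆ orb H β := by
  rintro γ ⟨h, hH, -, rfl⟩
  exact ⟨h, hH, rfl⟩

theorem self_mem_orb : α ∈ orb H α := ⟨1, H.one_mem, rfl⟩

theorem inv_apply_mem_orb {g : Equiv.Perm Ω} (hg : g ∈ H) {δ : Ω} (hδ : δ ∈ orb H β) :
    g⁻¹ δ ∈ orb H β := by
  obtain ⟨k, hk, rfl⟩ := hδ
  exact ⟨g⁻¹ * k, H.mul_mem (H.inv_mem hg) hk, rfl⟩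

theorem mk_apply_mem_orbArcs_iff {g : Equiv.Perm Ω} (hg : g ∈ H) {δ : Ω} :
    (g α, δ) ∈ orbArcs H α β ↔ g⁻¹ δ ∈ stabOrb H α β := by
  constructor
  · rintro ⟨h, hH, hα, hβ⟩
    refine ⟨g⁻¹ * h, H.mul_mem (H.inv_mem hg) hH, ?_, ?_⟩ <;>
      simp [Equiv.Perm.mul_apply, hα, hβ]
  · rintro ⟨h, hH, hα, hβ⟩
    refine ⟨g * h, H.mul_mem hg hH, ?_, ?_⟩ <;>
      simp [Equiv.Perm.mul_apply, hα, hβ]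

theorem stabOrb_eq_orb_iff :
    stabOrb H α β = orb H β ↔ ∀ γ ∈ orb H α, ∀ δ ∈ orb H β, (γ, δ) ∈ orbArcs H α β := by
  constructor
  · rintro heq _ ⟨g, hg, rfl⟩ δ hδ
    rw [mk_apply_mem_orbArcs_iff H hg, heq]
    exact inv_apply_mem_orb H hg hδ
  · intro harcs
    exact (stabOrb_subset_orb H).antisymm fun δ hδ => harcs α (self_mem_orb H) δ hδ

theorem ncard_stabOrb_eq_ncard_orb_iff [Finite Ω] :
    (stabOrb H α β).ncard = (orb H β).ncard ↔ stabOrb H α β = orb H β :=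
  ⟨fun h => Set.eq_of_subset_of_ncard_le (stabOrb_subset_orb H) h.ge, congrArg Set.ncard⟩

end OrbitalGraph

theorem stabOrb_card_le_diff_orbit_general (H : Subgroup (Equiv.Perm Ω)) (α β : Ω) :
    (stabOrb H α β).ncard ≤ (orb H β).ncard ∧
      ((stabOrb H α β).ncard = (orb H β).ncard ↔
        ∀ γ ∈ orb H α, ∀ δ ∈ orb H β, (γ, δ) ∈ orbArcs H α β) :=
  ⟨Set.ncard_le_ncard (stabOrb_subset_orb H),
    (ncard_stabOrb_eq_ncard_orb_iff H).trans (stabOrb_eq_orb_iff H)⟩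

/-- If `β ∉ α^H`, then `|β^{H_α}| ≤ |β^H|`, with equality iff every pair `(γ,δ)`
with `γ ∈ α^H` and `δ ∈ β^H` is an arc of `Γ(H,Ω,(α,β))`. -/
theorem stabOrb_card_le_diff_orbit (H : Subgroup (Equiv.Perm Ω)) (α β : Ω)
    (hβ : β ∉ orb H α) :
    (stabOrb H α β).ncard ≤ (orb H β).ncard ∧
      ((stabOrb H α β).ncard = (orb H β).ncard ↔
        ∀ γ ∈ orb H α, ∀ δ ∈ orb H β, (γ, δ) ∈ orbArcs H α β) :=
  stabOrb_card_le_diff_orbit_general H α β
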